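/- Let p ≥ 2, x¹,…,xᵐ ∈ ℝⁿ, ω_i > 0, ρ ∈ (0,1), and α = √(2 ln(m/ρ)). Let ξ ∈ {-1,1}ⁿ be a Rademacher vector and x̃ = n^{-1/p}ξ. With probability at least 1 - ρ, x̃ is feasible (‖x̃‖_p = 1) and min_i ω_i‖x̃ - xⁱ‖₂² ≥ ((1 - √(2 ln(m/ρ)/n))/2) · v(P), where v(P) is the optimal value of max_{‖x‖_p≤1} min_i ω_i‖x - xⁱ‖₂². -/

import Mathlib

/-!
Every realisation of `x̃ = n^{-1/p} ξ` lies on the unit sphere of `ℓ_p` and has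
`‖x̃‖₂² = n^{1-2/p}`, while convexity of `t ↦ t^{p/2}` gives `‖z‖₂² ≤ n^{1-2/p}` on the unit
`ℓ_p`-ball, so `v(P) ≤ 2 ω_i (n^{1-2/p} + ‖xⁱ‖²)` for every `i`. Since
`‖x̃ - xⁱ‖² = n^{1-2/p} + ‖xⁱ‖² - 2 n^{-1/p} ⟨xⁱ, ξ⟩`, AM–GM shows that the bound can only fail
when `⟨xⁱ, ξ⟩ > √(2 ln(m/ρ) ‖xⁱ‖²)` for some `i`. By Hoeffding's inequality each of these `m`
events has probability at most `ρ/m`, and a union bound finishes.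
-/

open Finset Real MeasureTheory ProbabilityTheory ENNReal

noncomputable def pNorm (n : ℕ) (p : ℝ) (x : Fin n → ℝ) : ℝ :=
  (∑ i, |x i| ^ p) ^ (1 / p)

structure IsRademacher {Ω : Type*} [MeasurableSpace Ω] (μ : Measure Ω) (X : Ω → ℝ) : Prop where
  measurable : Measurable X
  eq_one_or_eq_neg_one : ∀ ω, X ω = 1 ∨ X ω = -1
  measure_eq_one : μ {ω | X ω = 1} = 1 / 2

namespace IsRademacher

variable {Ω : Type*} [MeasurableSpace Ω] {μ : Measure Ω} [IsProbabilityMeasure μ]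

lemma integral_eq_zero {X : Ω → ℝ} (hX : IsRademacher μ X) : μ[X] = 0 := by
  set A := {ω | X ω = 1}
  have hA : MeasurableSet A := hX.measurable (measurableSet_singleton 1)
  have hX_eq : X = fun ω => 2 * A.indicator 1 ω - 1 := by
    funext ω
    rcases hX.eq_one_or_eq_neg_one ω with h | h <;> simp [A, Set.indicator, h] <;> norm_num
  have hμA : μ.real A = 1 / 2 := by simp [measureReal_def, A, hX.measure_eq_one]
  rw [hX_eq, integral_sub ((integrable_const _).indicator hA |>.const_mul 2) (integrable_const 1),
    integral_const_mul, integral_indicator_one hA, hμA]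
  simp

lemma hasSubgaussianMGF {X : Ω → ℝ} (hX : IsRademacher μ X) : HasSubgaussianMGF X 1 μ := by
  have hIcc : ∀ᵐ ω ∂μ, X ω ∈ Set.Icc (-1 : ℝ) 1 := ae_of_all _ fun ω => by
    rcases hX.eq_one_or_eq_neg_one ω with h | h <;> simp [h]
  convert hasSubgaussianMGF_of_mem_Icc_of_integral_eq_zero hX.measurable.aemeasurable hIcc
    hX.integral_eq_zero
  ext; norm_num

variable {ι : Type*} [Fintype ι] {ξ : ι → Ω → ℝ}

lemma measure_sum_mul_ge_le (hξ : ∀ j, IsRademacher μ (ξ j)) (hindep : iIndepFun ξ μ)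
    (a : ι → ℝ) {t : ℝ} (ht : 0 ≤ t) :
    μ.real {ω | t ≤ ∑ j, a j * ξ j ω} ≤ exp (-t ^ 2 / (2 * ∑ j, a j ^ 2)) := by
  have hsubG : ∀ j ∈ univ, HasSubgaussianMGF (fun ω => a j * ξ j ω) (‖a j‖₊ ^ 2) μ :=
    fun j _ => by
      convert (hξ j).hasSubgaussianMGF.const_mul (a j) using 1
      ext
      -- the constant of `const_mul` is a bare `Subtype.mk`, which `simp` does not see through
      change _ = a j ^ 2 * 1
      simp
  have := HasSubgaussianMGF.measure_sum_ge_le_of_iIndepFun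
    (hindep.comp (fun j y => a j * y) fun j => measurable_const_mul (a j)) hsubG ht
  simpa using this

lemma measure_sum_mul_gt_sqrt_le (hξ : ∀ j, IsRademacher μ (ξ j)) (hindep : iIndepFun ξ μ)
    (a : ι → ℝ) {L : ℝ} (hL : 0 ≤ L) :
    μ {ω | √(2 * L * ∑ j, a j ^ 2) < ∑ j, a j * ξ j ω} ≤ ENNReal.ofReal (exp (-L)) := by
  -- for `a = 0` Hoeffding's bound degenerates to `exp 0`, but the strict event is empty
  rcases (sum_nonneg fun j _ => sq_nonneg (a j) : 0 ≤ ∑ j, a j ^ 2).eq_or_lt with hD | hD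
  · have ha : ∀ j, a j = 0 := fun j => by
      simpa using (sum_eq_zero_iff_of_nonneg fun j _ => sq_nonneg (a j)).mp hD.symm j (mem_univ j)
    simp [ha]
  calc μ {ω | √(2 * L * ∑ j, a j ^ 2) < ∑ j, a j * ξ j ω}
      ≤ μ {ω | √(2 * L * ∑ j, a j ^ 2) ≤ ∑ j, a j * ξ j ω} :=
        measure_mono (Set.ofPred_subset_ofPred.2 fun _ => le_of_lt)
    _ = ENNReal.ofReal (μ.real {ω | √(2 * L * ∑ j, a j ^ 2) ≤ ∑ j, a j * ξ j ω}) :=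
      (ofReal_measureReal).symm
    _ ≤ ENNReal.ofReal (exp (-L)) := by
      refine ENNReal.ofReal_le_ofReal <|
        (measure_sum_mul_ge_le hξ hindep a (sqrt_nonneg _)).trans_eq ?_
      rw [sq_sqrt (by positivity)]
      field_simp

end IsRademacher

lemma pNorm_eq_one_of_forall_abs_eq {n : ℕ} (hn : n ≠ 0) {p : ℝ} (hp : p ≠ 0) {z : Fin n → ℝ}
    (hz : ∀ j, |z j| = (n : ℝ) ^ (-(1 / p))) : pNorm n p z = 1 := by
  have hn' : (0 : ℝ) < n := by positivity
  have hzp : ∀ j, |z j| ^ p = (n : ℝ)⁻¹ := fun j => by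
    rw [hz, ← rpow_mul hn'.le, neg_mul, one_div, inv_mul_cancel₀ hp, Real.rpow_neg_one]
  simp [pNorm, hzp, hn'.ne']

lemma sum_abs_rpow_le_one_of_pNorm_le_one {n : ℕ} {p : ℝ} (hp : 0 < p) {z : Fin n → ℝ}
    (hz : pNorm n p z ≤ 1) : ∑ j, |z j| ^ p ≤ 1 := by
  have h0 : 0 ≤ ∑ j, |z j| ^ p := sum_nonneg fun j _ => by positivity
  calc ∑ j, |z j| ^ p = (pNorm n p z) ^ p := by
        rw [pNorm, ← rpow_mul h0, one_div_mul_cancel hp.ne', Real.rpow_one]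
    _ ≤ 1 := rpow_le_one (rpow_nonneg h0 _) hz hp.le

lemma sum_sq_le_of_pNorm_le_one {n : ℕ} {p : ℝ} (hp : 2 ≤ p) {z : Fin n → ℝ}
    (hz : pNorm n p z ≤ 1) : ∑ j, z j ^ 2 ≤ (n : ℝ) ^ (1 - 2 / p) := by
  have hp0 : 0 < p := by linarith
  have hpow : (∑ j, z j ^ 2) ^ (p / 2) ≤ (n : ℝ) ^ (p / 2 - 1) :=
    calc (∑ j, z j ^ 2) ^ (p / 2) ≤ (n : ℝ) ^ (p / 2 - 1) * ∑ j, (z j ^ 2) ^ (p / 2) := by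
          simpa using rpow_sum_le_const_mul_sum_rpow_of_nonneg univ (by linarith)
            fun j _ => sq_nonneg (z j)
      _ = (n : ℝ) ^ (p / 2 - 1) * ∑ j, |z j| ^ p := by
          congr 1
          refine sum_congr rfl fun j _ => ?_
          rw [← sq_abs, ← Real.rpow_natCast, ← rpow_mul (abs_nonneg _)]
          ring_nf
      _ ≤ (n : ℝ) ^ (p / 2 - 1) :=
          mul_le_of_le_one_right (by positivity) (sum_abs_rpow_le_one_of_pNorm_le_one hp0 hz)
  rwa [← rpow_le_rpow_iff (sum_nonneg fun j _ => sq_nonneg (z j)) (by positivity)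
    (by positivity : 0 < p / 2), ← rpow_mul (Nat.cast_nonneg n),
    show (1 - 2 / p) * (p / 2) = p / 2 - 1 by field_simp]

section Dispersion

variable {ι : Type*} {n : ℕ}

noncomputable def dispersion (w : ι → ℝ) (x : ι → Fin n → ℝ) (z : Fin n → ℝ) : ℝ :=
  ⨅ i, w i * ∑ j, (z j - x i j) ^ 2

noncomputable def dispersionValues (n : ℕ) (p : ℝ) (w : ι → ℝ) (x : ι → Fin n → ℝ) : Set ℝ :=
  {v | ∃ z : Fin n → ℝ, pNorm n p z ≤ 1 ∧ v = dispersion w x z}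

variable {p : ℝ} {w : ι → ℝ} {x : ι → Fin n → ℝ}

lemma dispersion_nonneg (hw : ∀ i, 0 ≤ w i) (z : Fin n → ℝ) : 0 ≤ dispersion w x z :=
  Real.iInf_nonneg fun i => mul_nonneg (hw i) (sum_nonneg fun _ _ => sq_nonneg _)

lemma nonneg_of_isLUB_dispersionValues (hw : ∀ i, 0 ≤ w i) {v : ℝ}
    (hv : IsLUB (dispersionValues n p w x) v) : 0 ≤ v :=
  (dispersion_nonneg hw 0).trans <| hv.1 ⟨0, by
    rcases eq_or_ne p 0 with rfl | hp <;> simp [pNorm, zero_rpow, *], rfl⟩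

lemma mem_upperBounds_dispersionValues (hp : 2 ≤ p) (hw : ∀ i, 0 ≤ w i) (i : ι) :
    2 * (w i * ((n : ℝ) ^ (1 - 2 / p) + ∑ j, x i j ^ 2)) ∈
      upperBounds (dispersionValues n p w x) := by
  rintro v ⟨z, hz, rfl⟩
  have hsum : ∑ j, (z j - x i j) ^ 2 ≤ 2 * ∑ j, z j ^ 2 + 2 * ∑ j, x i j ^ 2 := by
    rw [mul_sum, mul_sum, ← sum_add_distrib]
    exact sum_le_sum fun j _ => by nlinarith [sq_nonneg (z j + x i j)]
  have hbdd : BddBelow (Set.range fun k => w k * ∑ j, (z j - x k j) ^ 2) :=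
    ⟨0, by rintro _ ⟨k, rfl⟩; exact mul_nonneg (hw k) (sum_nonneg fun _ _ => sq_nonneg _)⟩
  calc dispersion w x z ≤ w i * ∑ j, (z j - x i j) ^ 2 := ciInf_le hbdd i
    _ ≤ w i * (2 * (n : ℝ) ^ (1 - 2 / p) + 2 * ∑ j, x i j ^ 2) := by
        gcongr
        · exact hw i
        · linarith [sum_sq_le_of_pNorm_le_one hp hz]
    _ = 2 * (w i * ((n : ℝ) ^ (1 - 2 / p) + ∑ j, x i j ^ 2)) := by ring

end Dispersion

lemma rpow_neg_one_div_sq_mul_self {n p : ℝ} (hn : 0 < n) :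
    (n ^ (-(1 / p))) ^ 2 * n = n ^ (1 - 2 / p) := by
  rw [← Real.rpow_natCast, ← rpow_mul hn.le, ← rpow_add_one hn.ne']
  push_cast; ring_nf

lemma sum_sq_mul_sub_eq {n : ℕ} (c : ℝ) {ε : Fin n → ℝ} (hε : ∀ j, ε j ^ 2 = 1) (y : Fin n → ℝ) :
    ∑ j, (c * ε j - y j) ^ 2 = c ^ 2 * n + ∑ j, y j ^ 2 - 2 * c * ∑ j, y j * ε j := by
  have hterm : ∀ j, (c * ε j - y j) ^ 2 = c ^ 2 + y j ^ 2 - 2 * c * (y j * ε j) := fun j => by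
    linear_combination c ^ 2 * hε j
  simp only [hterm, sum_sub_distrib, sum_add_distrib, ← mul_sum, sum_const, card_univ,
    Fintype.card_fin, nsmul_eq_mul]
  ring

lemma two_mul_mul_sqrt_le {c L n B : ℝ} (hc : 0 ≤ c) (hL : 0 ≤ L) (hn : 0 < n) (hB : 0 ≤ B) :
    2 * c * √(2 * L * B) ≤ √(2 * L / n) * (c ^ 2 * n + B) := by
  have hlhs : √((2 * c) ^ 2 * (2 * L * B)) = 2 * c * √(2 * L * B) := by
    rw [sqrt_mul (by positivity), sqrt_sq (by positivity)]
  have hrhs : √((c ^ 2 * n + B) ^ 2 * (2 * L / n)) = √(2 * L / n) * (c ^ 2 * n + B) := by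
    rw [sqrt_mul (by positivity), sqrt_sq (by positivity), mul_comm]
  rw [← hlhs, ← hrhs]
  refine sqrt_le_sqrt ?_
  rw [mul_div_assoc', le_div_iff₀ hn]
  nlinarith [mul_nonneg hL (sq_nonneg (c ^ 2 * n - B))]

lemma half_mul_le_dispersion_of_forall_sum_mul_le {ι : Type*} [Nonempty ι] {n : ℕ} (hn : n ≠ 0)
    {p : ℝ} (hp : 2 ≤ p) {w : ι → ℝ} (hw : ∀ i, 0 ≤ w i) {x : ι → Fin n → ℝ} {v : ℝ}
    (hv : IsLUB (dispersionValues n p w x) v) {L : ℝ} (hL : 0 ≤ L) {ε : Fin n → ℝ}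
    (hε : ∀ j, ε j ^ 2 = 1) (hsum : ∀ i, ∑ j, x i j * ε j ≤ √(2 * L * ∑ j, x i j ^ 2)) :
    (1 - √(2 * L / n)) / 2 * v ≤ dispersion w x (fun j => (n : ℝ) ^ (-(1 / p)) * ε j) := by
  have hn' : (0 : ℝ) < n := by positivity
  set c := (n : ℝ) ^ (-(1 / p))
  set β := √(2 * L / n)
  have hc : 0 ≤ c := by positivity
  refine le_ciInf fun i => ?_
  set B := ∑ j, x i j ^ 2
  have hB : 0 ≤ B := sum_nonneg fun _ _ => sq_nonneg _
  have hv_le : v ≤ 2 * (w i * (c ^ 2 * n + B)) := by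
    rw [rpow_neg_one_div_sq_mul_self hn']
    exact hv.2 (mem_upperBounds_dispersionValues hp hw i)
  have hdev : 2 * c * ∑ j, x i j * ε j ≤ β * (c ^ 2 * n + B) :=
    (mul_le_mul_of_nonneg_left (hsum i) (by positivity)).trans (two_mul_mul_sqrt_le hc hL hn' hB)
  rw [sum_sq_mul_sub_eq c hε]
  rcases le_total ((1 - β) / 2) 0 with hβ | hβ
  · calc (1 - β) / 2 * v ≤ 0 :=
          mul_nonpos_of_nonpos_of_nonneg hβ (nonneg_of_isLUB_dispersionValues hw hv)
      _ ≤ w i * (c ^ 2 * n + B - 2 * c * ∑ j, x i j * ε j) := by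
          rw [← sum_sq_mul_sub_eq c hε]
          exact mul_nonneg (hw i) (sum_nonneg fun _ _ => sq_nonneg _)
  · calc (1 - β) / 2 * v ≤ (1 - β) / 2 * (2 * (w i * (c ^ 2 * n + B))) :=
          mul_le_mul_of_nonneg_left hv_le hβ
      _ = w i * (c ^ 2 * n + B - β * (c ^ 2 * n + B)) := by ring
      _ ≤ w i * (c ^ 2 * n + B - 2 * c * ∑ j, x i j * ε j) := by gcongr; exact hw i

/-- With probability at least 1 - ρ, the random point x̃ = n^{-1/p}ξ (ξ Rademacher)
    is feasible and achieves min_i ω_i‖x̃ - xⁱ‖₂² ≥ ((1 - √(2 ln(m/ρ)/n))/2)·v(P). -/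
theorem maximin_dispersion_randomized {Ω : Type*} [MeasurableSpace Ω]
    (μ : Measure Ω) [IsProbabilityMeasure μ] (n m : ℕ) (hn : 1 ≤ n) (hm : 1 ≤ m)
    (p : ℝ) (hp : 2 ≤ p) (x : Fin m → Fin n → ℝ) (w : Fin m → ℝ) (hw : ∀ i, 0 < w i)
    (ρ : ℝ) (hρ0 : 0 < ρ) (hρ1 : ρ < 1)
    (ξ : Fin n → Ω → ℝ) (hmeas : ∀ j, Measurable (ξ j))
    (hindep : iIndepFun ξ μ)
    (hval : ∀ j ω, ξ j ω = 1 ∨ ξ j ω = -1)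
    (hhalf : ∀ j, μ {ω | ξ j ω = 1} = 1 / 2)
    (vP : ℝ)
    (hvP : IsLUB {v : ℝ | ∃ z : Fin n → ℝ, pNorm n p z ≤ 1 ∧
        v = ⨅ i : Fin m, w i * ∑ j, (z j - x i j) ^ 2} vP) :
    (1 : ℝ≥0∞) - ENNReal.ofReal ρ
      ≤ μ {ω | pNorm n p (fun j => (n : ℝ) ^ (-(1 / p)) * ξ j ω) = 1 ∧
          (1 - Real.sqrt (2 * Real.log (m / ρ) / n)) / 2 * vP
            ≤ ⨅ i : Fin m, w i * ∑ j, ((n : ℝ) ^ (-(1 / p)) * ξ j ω - x i j) ^ 2} := by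
  have hξ : ∀ j, IsRademacher μ (ξ j) := fun j => ⟨hmeas j, hval j, hhalf j⟩
  have hm' : (0 : ℝ) < m := by exact_mod_cast hm
  have hL : 0 ≤ log (m / ρ) :=
    log_nonneg <| (one_le_div hρ0).2 <| hρ1.le.trans (by exact_mod_cast hm)
  have hexp : exp (-log (m / ρ)) = ρ / m := by
    rw [exp_neg, exp_log (div_pos hm' hρ0), inv_div]
  set G := {ω | pNorm n p (fun j => (n : ℝ) ^ (-(1 / p)) * ξ j ω) = 1 ∧
      (1 - √(2 * log (m / ρ) / n)) / 2 * vP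
        ≤ ⨅ i : Fin m, w i * ∑ j, ((n : ℝ) ^ (-(1 / p)) * ξ j ω - x i j) ^ 2}
  set F : Fin m → Set Ω :=
    fun i => {ω | √(2 * log (m / ρ) * ∑ j, x i j ^ 2) < ∑ j, x i j * ξ j ω}
  have hcover : Gᶜ ⊆ ⋃ i, F i := by
    intro ω hω
    by_contra hgood
    simp only [F, Set.mem_iUnion, Set.mem_ofPred_eq, not_exists, not_lt] at hgood
    have hε : ∀ j, ξ j ω ^ 2 = 1 := fun j => by rcases hval j ω with h | h <;> simp [h]
    have : Nonempty (Fin m) := ⟨⟨0, hm⟩⟩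
    refine hω ⟨pNorm_eq_one_of_forall_abs_eq (by omega) (by linarith) fun j => ?_,
      half_mul_le_dispersion_of_forall_sum_mul_le (by omega) hp (fun i => (hw i).le) hvP hL hε
        hgood⟩
    rcases hval j ω with h | h <;> simp [h] <;> positivity
  rw [tsub_le_iff_right]
  calc (1 : ℝ≥0∞) = μ Set.univ := measure_univ.symm
    _ ≤ μ G + μ Gᶜ := measure_univ_le_add_compl G
    _ ≤ μ G + ∑ i, μ (F i) := by
        gcongr
        exact (measure_mono hcover).trans (measure_iUnion_fintype_le μ F)
    _ ≤ μ G + ∑ _i : Fin m, ENNReal.ofReal (ρ / m) := by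
        gcongr with i
        rw [← hexp]
        exact IsRademacher.measure_sum_mul_gt_sqrt_le hξ hindep (x i) hL
    _ = μ G + ENNReal.ofReal ρ := by
        rw [sum_const, card_univ, Fintype.card_fin, nsmul_eq_mul, ← ENNReal.ofReal_natCast,
          ← ENNReal.ofReal_mul (Nat.cast_nonneg m), mul_div_cancel₀ _ hm'.ne']
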